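/- arXiv:2409.06658 — 3 statements merged into one kernel-verified Lean document; each statement's English description precedes it below -/
import Mathlib

section
/- Let r ≥ 1, n ≥ 0 and 0 ≤ l ≤ r−1 be integers, let P ∈ ℂ[z₁,…,z_r] be a symmetric polynomial of degree at most n in each variable, and let Q₀,…,Q_n ∈ ℂ[z₁,…,z_r] be symmetric polynomials of degree exactly 1 in each variable, written Q_k = ∑_{m=0}^{r} A_{k,m} e_m. For y = (y₁,…,y_l) ∈ ℂ^l set Q̂_k(y) = ∑_{m=0}^{l} A_{k,m+r−l} e_m(y₁,…,y_l), and assume Q̂_k(y) ≠ 0 for all k. Let x ∈ ℂ^r and, for each k ∈ {0,…,n}, let t_k ∈ ℂ^r satisfy e_m(t_k) = e_m(x) − (Q_k(x)/Q̂_k(y))·e_{m+l−r}(y₁,…,y_l) for all m ∈ {1,…,r}, where e_j := 0 for j < 0. Assume Q_j(x) ≠ 0 for all j and Q_j(t_k) ≠ 0 for all j ≠ k. Then P(x)/∏_{j=0}^{n} Q_j(x) = ∑_{k=0}^{n} [ P(t_k)/∏_{j=0, j≠k}^{n} Q_j(t_k) ] · 1/Q_k(x). -/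
/-!
Put `s_k = Q_k(x) / Q̂_k(y)` and `v_m = e_{m+l-r}(y)`. The hypothesis on `t_k` says that
`e(t_k) = e(x) - s_k v`, and since each `Q_j` is affine in `e_1, …, e_r` this gives
`Q_j(x) = Q̂_j(y) s_j` and `Q_j(t_k) = Q̂_j(y) (s_j - s_k)`; in particular the `s_k` are distinct.
By the fundamental theorem of symmetric polynomials `P = F(e_1, …, e_r)`, where the total degree
of `F` equals the degree of `P` in a single variable, so `f(c) = F(e(x) - c v)` is a polynomial of
degree at most `n` with `f(0) = P(x)` and `f(s_k) = P(t_k)`. The identity is the Lagrange partial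
fraction expansion of `f(z) / ∏_j Q̂_j(y) (s_j - z)` at `z = 0`.
-/

open MvPolynomial Finset

theorem Finsupp.apply_le_apply_of_toLex_le {α N : Type*} [LinearOrder α] [Zero N]
    [PartialOrder N] {i : α} (hi : IsBot i) {a b : α →₀ N} (h : toLex a ≤ toLex b) :
    a i ≤ b i := by
  rcases h.lt_or_eq with h | h
  · obtain ⟨j, hj, hlt⟩ := Finsupp.lex_def.mp h
    rcases (hi j).lt_or_eq with hij | rfl
    · exact (hj i hij).le
    · exact hlt.le
  · rw [toLex.injective h]

theorem Fin.accumulate_apply_zero {n m : ℕ} (t : Fin n → ℕ) :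
    accumulate n (m + 1) t 0 = ∑ i, t i := by
  simp [accumulate_apply]

namespace MvPolynomial

variable {R : Type*}

section CommSemiring

variable [CommSemiring R]

/- The lex-leading monomial of `esymmAlgHomMonomial u` is `accumulate u`, whose first coordinate
is `∑ i, u i`. These monomials are pairwise distinct, so the largest of them survives in
`esymmAlgHom F` and its first coordinate is the total degree of `F`. -/
theorem totalDegree_le_degreeOf_zero_esymmAlgHom {r : ℕ} (F : MvPolynomial (Fin (r + 1)) R) :
    F.totalDegree ≤ (esymmAlgHom (Fin (r + 1)) R (r + 1) F).val.degreeOf 0 := by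
  set f : (Fin (r + 1) →₀ ℕ) → MvPolynomial (Fin (r + 1)) R :=
    fun u => esymmAlgHomMonomial (Fin (r + 1)) u (F.coeff u)
  have hsum : (esymmAlgHom (Fin (r + 1)) R (r + 1) F).val = ∑ u ∈ F.support, f u := by
    conv_lhs => rw [F.as_sum]
    rw [map_sum, AddSubmonoidClass.coe_finsetSum]
    rfl
  have hdeg : ∀ u ∈ F.support, ⇑(ofLex ((f u).supDegree toLex)) = Fin.accumulate _ _ u :=
    fun u hu => supDegree_esymmAlgHomMonomial (mem_support_iff.mp hu) u le_rfl
  rcases F.support.eq_empty_or_nonempty with h | hF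
  · simp [totalDegree, h]
  obtain ⟨u₀, hu₀, hmax⟩ := F.support.exists_max_image (fun u => (f u).supDegree toLex) hF
  have hlt : ∀ u ∈ F.support, u ≠ u₀ → (f u).supDegree toLex < (f u₀).supDegree toLex :=
    fun u hu hne => (hmax u hu).lt_of_ne fun h => hne <| DFunLike.coe_injective <|
      Fin.accumulate_injective le_rfl <| by rw [← hdeg u hu, ← hdeg u₀ hu₀, h]
  obtain ⟨hsup, hlead⟩ := AddMonoidAlgebra.supDegree_leadingCoeff_sum_eq hu₀ hlt
  have hP : ∑ u ∈ F.support, f u ≠ 0 := by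
    rw [← AddMonoidAlgebra.leadingCoeff_ne_zero toLex.injective, hlead,
      leadingCoeff_esymmAlgHomMonomial _ le_rfl]
    exact mem_support_iff.mp hu₀
  obtain ⟨a, ha, hae⟩ := AddMonoidAlgebra.exists_supDegree_mem_support toLex hP
  rw [hsum, totalDegree]
  refine Finset.sup_le fun u hu => le_trans ?_ (monomial_le_degreeOf 0 ha)
  calc (u.sum fun _ e => e) = ofLex ((f u).supDegree toLex) 0 := by
        rw [hdeg u hu, Fin.accumulate_apply_zero, Finsupp.sum_fintype _ _ fun _ => rfl]
    _ ≤ a 0 := Finsupp.apply_le_apply_of_toLex_le (fun j => Fin.zero_le j)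
        (by rw [toLex_ofLex, ← hae, hsup]; exact hmax u hu)

theorem totalDegree_le_of_forall_degreeOf_esymmAlgHom_le {r n : ℕ}
    (F : MvPolynomial (Fin r) R) (h : ∀ i, (esymmAlgHom (Fin r) R r F).val.degreeOf i ≤ n) :
    F.totalDegree ≤ n := by
  cases r with
  | zero => simp [totalDegree, Subsingleton.elim _ (0 : Fin 0 →₀ ℕ)]
  | succ r => exact (totalDegree_le_degreeOf_zero_esymmAlgHom F).trans (h 0)

theorem natDegree_aeval_le_totalDegree {σ : Type*} (F : MvPolynomial σ R)
    {g : σ → Polynomial R} (hg : ∀ i, (g i).natDegree ≤ 1) :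
    (aeval g F).natDegree ≤ F.totalDegree := by
  conv_lhs => rw [F.as_sum, map_sum]
  refine Polynomial.natDegree_sum_le_of_forall_le _ _ fun u hu => ?_
  rw [aeval_monomial, Polynomial.algebraMap_eq]
  refine Polynomial.natDegree_C_mul_le _ _ |>.trans <| Polynomial.natDegree_prod_le _ _ |>.trans ?_
  refine le_trans (Finset.sum_le_sum fun i _ => ?_) (le_totalDegree hu)
  exact Polynomial.natDegree_pow_le_of_le _ (hg i) |>.trans_eq (mul_one _)

end CommSemiring

variable [CommRing R]

noncomputable def restrictLine {σ : Type*} (F : MvPolynomial σ R) (a w : σ → R) :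
    Polynomial R :=
  aeval (fun i => Polynomial.C (a i) - Polynomial.C (w i) * Polynomial.X) F

theorem eval_restrictLine {σ : Type*} (F : MvPolynomial σ R) (a w : σ → R) (c : R) :
    (restrictLine F a w).eval c = eval (fun i => a i - c * w i) F := by
  rw [restrictLine, ← Polynomial.coe_aeval_eq_eval, comp_aeval_apply, ← aeval_eq_eval]
  congr 2
  funext i
  simp only [map_sub, map_mul, Polynomial.aeval_C, Polynomial.aeval_X,
    Algebra.algebraMap_self_apply, mul_comm]

theorem natDegree_restrictLine_le {σ : Type*} (F : MvPolynomial σ R) (a w : σ → R) :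
    (restrictLine F a w).natDegree ≤ F.totalDegree :=
  natDegree_aeval_le_totalDegree F fun i =>
    (Polynomial.natDegree_sub_le _ _).trans <| max_le (by simp)
      ((Polynomial.natDegree_C_mul_le _ _).trans Polynomial.natDegree_X_le)

theorem IsSymmetric.exists_natDegree_le_eval_eq {r n : ℕ} {P : MvPolynomial (Fin r) R}
    (hP : P.IsSymmetric) (hdeg : ∀ i, P.degreeOf i ≤ n) (a w : ℕ → R) :
    ∃ f : Polynomial R, f.natDegree ≤ n ∧ ∀ (t : Fin r → R) (c : R),
      (∀ m ∈ Icc 1 r, eval t (esymm (Fin r) R m) = a m - c * w m) → eval t P = f.eval c := by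
  obtain ⟨F, hF⟩ := (esymmAlgHom_fin_bijective R r).2 ⟨P, hP⟩
  have hPF : P = aeval (fun i : Fin r => esymm (Fin r) R (i + 1)) F := by
    rw [← esymmAlgHom_apply, hF]
  refine ⟨restrictLine F (fun i => a (i + 1)) (fun i => w (i + 1)),
    (natDegree_restrictLine_le _ _ _).trans ?_, fun t c ht => ?_⟩
  · exact totalDegree_le_of_forall_degreeOf_esymmAlgHom_le F (by rwa [hF])
  · rw [eval_restrictLine, hPF, ← aeval_eq_eval, comp_aeval_apply, ← aeval_eq_eval]
    congr 2
    funext i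
    exact ht _ (mem_Icc.2 ⟨Nat.le_add_left 1 i, i.2⟩)

theorem eval_sum_C_mul_esymm_of_eval_esymm_eq {σ : Type*} [Fintype σ] {N : ℕ} (A : ℕ → R)
    {x t : σ → R} {c : R} {w : ℕ → R}
    (h : ∀ m ∈ Icc 1 N, eval t (esymm σ R m) = eval x (esymm σ R m) - c * w m) :
    eval t (∑ m ∈ range (N + 1), C (A m) * esymm σ R m)
      = eval x (∑ m ∈ range (N + 1), C (A m) * esymm σ R m)
          - c * ∑ m ∈ Icc 1 N, A m * w m := by
  simp only [map_sum, map_mul, eval_C]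
  rw [range_eq_Ico, Ico_add_one_right_eq_Icc, Icc_eq_cons_Ioc N.zero_le, sum_cons, sum_cons,
    ← Icc_add_one_left_eq_Ioc, zero_add, sum_congr rfl fun m hm => by rw [h m hm],
    add_sub_assoc, mul_sum, ← sum_sub_distrib]
  congr 1
  · simp only [esymm_zero, map_one]
  · exact sum_congr rfl fun m _ => by ring

end MvPolynomial

theorem Polynomial.eval_div_prod_eq_sum {K ι : Type*} [Field K] [Fintype ι] [DecidableEq ι]
    {f : Polynomial K} (hf : f.degree < Fintype.card ι) {s b : ι → K}
    (hs : Function.Injective s) (hb : ∀ j, b j ≠ 0) {z : K} (hz : ∀ j, s j ≠ z) :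
    f.eval z / ∏ j, b j * (s j - z)
      = ∑ k, (f.eval (s k) / ∏ j ∈ univ.erase k, b j * (s j - s k))
          * (1 / (b k * (s k - z))) := by
  rw [Lagrange.eq_interpolate (s := univ) hs.injOn hf,
    Lagrange.eval_interpolate_not_at_node _ fun j _ => (hz j).symm, mul_sum, sum_div]
  refine sum_congr rfl fun k hk => ?_
  rw [Lagrange.eval_nodal, Lagrange.eval_interpolate_at_node _ hs.injOn hk,
    ← prod_erase_mul _ _ hk, ← prod_erase_mul _ _ hk, Lagrange.nodalWeight]
  have hz' : ∀ j, s j - z ≠ 0 := fun j => sub_ne_zero.2 (hz j)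
  have hfactor : ∏ j ∈ univ.erase k, (z - s j) * (s k - s j)⁻¹ / (b j * (s j - z))
      = (∏ j ∈ univ.erase k, b j * (s j - s k))⁻¹ := by
    rw [← prod_inv_distrib]
    refine prod_congr rfl fun j hj => ?_
    have hkj : s k - s j ≠ 0 := sub_ne_zero.2 (hs.ne (mem_erase.1 hj).1).symm
    have hjk : s j - s k ≠ 0 := sub_ne_zero.2 (hs.ne (mem_erase.1 hj).1)
    field_simp [hb j, hz' j]
    ring
  rw [prod_div_distrib, prod_mul_distrib] at hfactor
  rw [div_eq_mul_inv (eval (s k) f), ← hfactor]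
  field_simp [hb k, hz' k, sub_ne_zero.2 (hz k).symm]

theorem Finset.sum_Icc_mul_ite_eq_sum_range {R : Type*} [Semiring R] {l r : ℕ} (hl : l < r)
    (A E : ℕ → R) :
    ∑ m ∈ Icc 1 r, A m * (if r ≤ m + l then E (m + l - r) else 0)
      = ∑ m ∈ range (l + 1), A (m + r - l) * E m := by
  simp_rw [mul_ite, mul_zero]
  rw [← sum_filter]
  symm
  refine sum_nbij' (· + r - l) (· + l - r) ?_ ?_ ?_ ?_ fun m _ => by
    rw [show m + r - l + l - r = m by omega]
  all_goals intro m hm; simp only [mem_filter, mem_Icc, mem_range] at hm ⊢; omega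

theorem symmetric_partial_fraction_degenerate_general
    (r n l : ℕ) (hl : l < r)
    (P : MvPolynomial (Fin r) ℂ) (hPsym : P.IsSymmetric)
    (hPdeg : ∀ i : Fin r, P.degreeOf i ≤ n)
    (Q : Fin (n + 1) → MvPolynomial (Fin r) ℂ)
    (A : Fin (n + 1) → ℕ → ℂ)
    (hQA : ∀ k, Q k = ∑ m ∈ Finset.range (r + 1),
      MvPolynomial.C (A k m) * esymm (Fin r) ℂ m)
    (y : Fin l → ℂ)
    (hQhat : ∀ k, (∑ m ∈ Finset.range (l + 1),
      A k (m + r - l) * eval y (esymm (Fin l) ℂ m)) ≠ 0)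
    (x : Fin r → ℂ)
    (t : Fin (n + 1) → Fin r → ℂ)
    (ht : ∀ k, ∀ m ∈ Finset.Icc 1 r,
      eval (t k) (esymm (Fin r) ℂ m) =
        eval x (esymm (Fin r) ℂ m)
          - (eval x (Q k) / (∑ m' ∈ Finset.range (l + 1),
              A k (m' + r - l) * eval y (esymm (Fin l) ℂ m')))
            * (if r ≤ m + l then eval y (esymm (Fin l) ℂ (m + l - r)) else 0))
    (hQx : ∀ j, eval x (Q j) ≠ 0)
    (hQt : ∀ j k, j ≠ k → eval (t k) (Q j) ≠ 0) :
    eval x P / ∏ j, eval x (Q j)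
      = ∑ k, (eval (t k) P / ∏ j ∈ Finset.univ.erase k, eval (t k) (Q j))
          * (1 / eval x (Q k)) := by
  set b : Fin (n + 1) → ℂ := fun k =>
    ∑ m ∈ range (l + 1), A k (m + r - l) * eval y (esymm (Fin l) ℂ m)
  set s : Fin (n + 1) → ℂ := fun k => eval x (Q k) / b k
  obtain ⟨f, hfdeg, hf⟩ := hPsym.exists_natDegree_le_eval_eq hPdeg
    (fun m => eval x (esymm (Fin r) ℂ m))
    (fun m => if r ≤ m + l then eval y (esymm (Fin l) ℂ (m + l - r)) else 0)
  have hfdeg' : f.degree < Fintype.card (Fin (n + 1)) := by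
    rw [Fintype.card_fin]
    exact (Polynomial.degree_le_of_natDegree_le hfdeg).trans_lt (by exact_mod_cast n.lt_add_one)
  have hQx' : ∀ j, eval x (Q j) = b j * (s j - 0) := fun j => by
    rw [sub_zero, mul_div_cancel₀ _ (hQhat j)]
  have hQt' : ∀ j k, eval (t k) (Q j) = b j * (s j - s k) := fun j k => by
    rw [hQA j, eval_sum_C_mul_esymm_of_eval_esymm_eq _ (ht k), ← hQA j,
      sum_Icc_mul_ite_eq_sum_range hl (A j) fun m => eval y (esymm (Fin l) ℂ m),
      mul_sub, mul_div_cancel₀ _ (hQhat j)]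
    simp only [s, b]
    ring
  have hs : Function.Injective s := fun j k hjk => by
    by_contra hne
    exact hQt j k hne (by rw [hQt', hjk, sub_self, mul_zero])
  calc eval x P / ∏ j, eval x (Q j) = f.eval 0 / ∏ j, b j * (s j - 0) := by
        rw [hf x 0 fun m _ => by ring, prod_congr rfl fun j _ => hQx' j]
    _ = ∑ k, (f.eval (s k) / ∏ j ∈ univ.erase k, b j * (s j - s k))
          * (1 / (b k * (s k - 0))) :=
        Polynomial.eval_div_prod_eq_sum hfdeg' hs hQhat fun j => div_ne_zero (hQx j) (hQhat j)
    _ = _ := by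
        refine sum_congr rfl fun k _ => ?_
        rw [hf (t k) (s k) (ht k), ← hQx' k, prod_congr rfl fun j _ => hQt' j k]

/-- Corollary 2.2: degenerate partial fraction expansion for symmetric
rational functions, with `l` of the `y`-variables kept finite. -/
theorem symmetric_partial_fraction_degenerate
    (r n l : ℕ) (hr : 1 ≤ r) (hl : l < r)
    (P : MvPolynomial (Fin r) ℂ) (hPsym : P.IsSymmetric)
    (hPdeg : ∀ i : Fin r, P.degreeOf i ≤ n)
    (Q : Fin (n + 1) → MvPolynomial (Fin r) ℂ)
    (hQsym : ∀ k, (Q k).IsSymmetric)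
    (hQdeg : ∀ k (i : Fin r), (Q k).degreeOf i = 1)
    (A : Fin (n + 1) → ℕ → ℂ)
    (hQA : ∀ k, Q k = ∑ m ∈ Finset.range (r + 1),
      MvPolynomial.C (A k m) * esymm (Fin r) ℂ m)
    (y : Fin l → ℂ)
    (hQhat : ∀ k, (∑ m ∈ Finset.range (l + 1),
      A k (m + r - l) * eval y (esymm (Fin l) ℂ m)) ≠ 0)
    (x : Fin r → ℂ)
    (t : Fin (n + 1) → Fin r → ℂ)
    (ht : ∀ k, ∀ m ∈ Finset.Icc 1 r,
      eval (t k) (esymm (Fin r) ℂ m) =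
        eval x (esymm (Fin r) ℂ m)
          - (eval x (Q k) / (∑ m' ∈ Finset.range (l + 1),
              A k (m' + r - l) * eval y (esymm (Fin l) ℂ m')))
            * (if r ≤ m + l then eval y (esymm (Fin l) ℂ (m + l - r)) else 0))
    (hQx : ∀ j, eval x (Q j) ≠ 0)
    (hQt : ∀ j k, j ≠ k → eval (t k) (Q j) ≠ 0) :
    eval x P / ∏ j, eval x (Q j)
      = ∑ k, (eval (t k) P / ∏ j ∈ Finset.univ.erase k, eval (t k) (Q j))
          * (1 / eval x (Q k)) :=
  symmetric_partial_fraction_degenerate_general r n l hl P hPsym hPdeg Q A hQA y hQhat x t ht hQx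
    hQt
end

section
/- Let n ≥ 0 be an integer and let a, λ, x₁, x₂ ∈ ℂ be such that for all k ∈ {0,…,n}: x₁ + k ≠ 0, x₂ + k ≠ 0, λ + k ≠ 0, and λ − (λ−x₁)(λ−x₂)/(λ+k) + j ≠ 0 for all j ∈ {0,…,n}. Then (x₁+x₂+a)_n / ( (x₁)_{n+1} (x₂)_{n+1} ) = ∑_{k=0}^{n} [ (−1)^k / (k!(n−k)!) ] · [ ( λ − (λ−x₁)(λ−x₂)/(λ+k) + a − k )_n / ( λ − (λ−x₁)(λ−x₂)/(λ+k) )_{n+1} ] · ( 1/(x₁+k) + 1/(x₂+k) − 1/(λ+k) ). -/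
open Finset

/-- The Pochhammer symbol `(z)_k = z(z+1)⋯(z+k-1)`, with `(z)_0 = 1`. -/
noncomputable def poch (z : ℂ) (k : ℕ) : ℂ := ∏ j ∈ Finset.range k, (z + j)

/-!
Write `c_k = (-1)^k / (k! (n-k)!)`. Lagrange interpolation at the nodes `0, -1, …, -n` gives the
partial fraction expansion `(z + a)_n / (z)_{n+1} = ∑_k c_k (a - k)_n / (z + k)`. Applied twice, it
turns the left side into `∑_{k,j} c_k c_j (a-k-j)_n / ((x₁+k)(x₂+j))`; applied with `z = y_k`, where
`y_k = λ - (λ-x₁)(λ-x₂)/(λ+k)`, it turns the right side into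
`∑_{k,j} c_k c_j (a-k-j)_n A_k / (y_k + j)` with `A_k = 1/(x₁+k) + 1/(x₂+k) - 1/(λ+k)`.
The weights `c_k c_j (a-k-j)_n` are symmetric in `k, j`, so the two kernels only need to agree
after symmetrization. That is a rational identity, which holds because
`(λ + k)(y_k + j) = λ(x₁ + x₂ + k + j) + kj - x₁x₂` is symmetric in `k, j`.
-/

open Polynomial Lagrange Nat

section CommRing

variable {R : Type*} [CommRing R]

theorem prod_range_natCast_sub_self (i : ℕ) :
    ∏ j ∈ range i, ((j : R) - i) = (-1) ^ i * i ! := by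
  calc ∏ j ∈ range i, ((j : R) - i) = ∏ j ∈ range i, (-1 * ((i : R) - j)) :=
        prod_congr rfl fun _ _ => by ring
    _ = (-1) ^ i * i ! := by
        rw [prod_mul_distrib, prod_const, card_range, ← descPochhammer_eval_eq_prod_range,
          descPochhammer_eval_eq_descFactorial, Nat.descFactorial_self]

theorem prod_Ico_natCast_sub (i n : ℕ) :
    ∏ j ∈ Ico (i + 1) (n + 1), ((j : R) - i) = (n - i)! := by
  rw [prod_Ico_eq_prod_range, show n + 1 - (i + 1) = n - i by omega,
    ← prod_range_add_one_eq_factorial, Nat.cast_prod]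
  refine prod_congr rfl fun _ _ => ?_
  push_cast
  ring

theorem prod_erase_range_natCast_sub {i n : ℕ} (hi : i ≤ n) :
    ∏ j ∈ (range (n + 1)).erase i, ((j : R) - i) = (-1) ^ i * i ! * (n - i)! := by
  have hsplit : (range (n + 1)).erase i = range i ∪ Ico (i + 1) (n + 1) := by
    ext; simp only [mem_erase, mem_range, mem_union, mem_Ico]; omega
  have hdisj : Disjoint (range i) (Ico (i + 1) (n + 1)) :=
    disjoint_left.2 fun _ h h' => by simp only [mem_range, mem_Ico] at h h'; omega
  rw [hsplit, prod_union hdisj, prod_range_natCast_sub_self, prod_Ico_natCast_sub]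

end CommRing

theorem nodalWeight_range_neg_natCast {K : Type*} [Field K] {i n : ℕ} (hi : i ≤ n) :
    nodalWeight (range (n + 1)) (fun k : ℕ => -(k : K)) i = (-1) ^ i / (i ! * (n - i)!) := by
  simp only [nodalWeight, neg_sub_neg]
  rw [prod_inv_distrib, prod_erase_range_natCast_sub hi, mul_assoc, mul_inv, ← inv_pow,
    inv_neg_one, div_eq_mul_inv]

theorem eval_div_poch_eq_sum {n : ℕ} {p : ℂ[X]} (hp : p.degree ≤ n) {z : ℂ}
    (hz : ∀ k : ℕ, k ≤ n → z + k ≠ 0) :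
    p.eval z / poch z (n + 1) = ∑ k ∈ range (n + 1),
      (-1) ^ k / (k ! * (n - k)! : ℂ) * (p.eval (-k : ℂ) / (z + k)) := by
  set v : ℕ → ℂ := fun k => -(k : ℂ)
  have hv : Set.InjOn v (range (n + 1)) := fun i _ j _ h => by simpa [v] using h
  have hzv : ∀ i ∈ range (n + 1), z ≠ v i := fun i hi h =>
    hz i (mem_range_succ_iff.1 hi) (by simp [h, v])
  have hpoch : eval z (nodal (range (n + 1)) v) = poch z (n + 1) := by
    simp [eval_nodal, poch, v]
  have hpoch0 : poch z (n + 1) ≠ 0 :=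
    prod_ne_zero_iff.2 fun j hj => hz j (mem_range_succ_iff.1 hj)
  have hinterp := eval_interpolate_not_at_node (fun i => p.eval (v i)) hzv
  have hdeg : p.degree < #(range (n + 1)) := hp.trans_lt (by simp; exact_mod_cast n.lt_succ_self)
  rw [← eq_interpolate hv hdeg, hpoch] at hinterp
  rw [hinterp, mul_div_cancel_left₀ _ hpoch0]
  refine sum_congr rfl fun k hk => ?_
  rw [nodalWeight_range_neg_natCast (mem_range_succ_iff.1 hk)]
  simp only [v, sub_neg_eq_add]
  ring

theorem poch_add_div_poch (n : ℕ) (a : ℂ) {z : ℂ} (hz : ∀ k : ℕ, k ≤ n → z + k ≠ 0) :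
    poch (z + a) n / poch z (n + 1) = ∑ k ∈ range (n + 1),
      (-1) ^ k / (k ! * (n - k)! : ℂ) * (poch (a - k) n / (z + k)) := by
  set p : ℂ[X] := ∏ j ∈ range n, (X + C (a + j))
  have hp : p.degree ≤ n := by
    simp only [p, degree_prod, degree_X_add_C, sum_const, card_range, nsmul_one]; rfl
  have heval : ∀ x : ℂ, p.eval x = poch (x + a) n := fun x => by
    simp only [p, eval_prod, eval_add, eval_X, eval_C, poch, add_assoc]
  convert eval_div_poch_eq_sum hp hz using 4 with k
  · rw [heval]
  · rw [heval, neg_add_eq_sub]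

theorem poch_div_poch_mul_poch (n : ℕ) (a : ℂ) {x₁ x₂ : ℂ}
    (hx₁ : ∀ k : ℕ, k ≤ n → x₁ + k ≠ 0) (hx₂ : ∀ k : ℕ, k ≤ n → x₂ + k ≠ 0) :
    poch (x₁ + x₂ + a) n / (poch x₁ (n + 1) * poch x₂ (n + 1)) =
      ∑ k ∈ range (n + 1), ∑ j ∈ range (n + 1),
        (-1) ^ k / (k ! * (n - k)! : ℂ) * ((-1) ^ j / (j ! * (n - j)! : ℂ)) * poch (a - k - j) n *
          (1 / ((x₁ + k) * (x₂ + j))) := by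
  rw [← div_div, add_assoc, poch_add_div_poch n _ hx₁, sum_div]
  refine sum_congr rfl fun k _ => ?_
  have hk := poch_add_div_poch n (a - k) hx₂
  rw [← add_sub_assoc] at hk
  calc (-1) ^ k / (k ! * (n - k)! : ℂ) * (poch (x₂ + a - k) n / (x₁ + k)) / poch x₂ (n + 1)
      = (-1) ^ k / (k ! * (n - k)! : ℂ) / (x₁ + k) * (poch (x₂ + a - k) n / poch x₂ (n + 1)) := by
        ring
    _ = _ := by
        rw [hk, mul_sum]
        exact sum_congr rfl fun j _ => by rw [one_div, mul_inv]; ring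

theorem sum_sum_mul_eq_of_add_swap {ι R : Type*} [CommSemiring R] [IsAddTorsionFree R]
    (s : Finset ι) {w f g : ι → ι → R} (hw : ∀ k ∈ s, ∀ j ∈ s, w k j = w j k)
    (hfg : ∀ k ∈ s, ∀ j ∈ s, f k j + f j k = g k j + g j k) :
    ∑ k ∈ s, ∑ j ∈ s, w k j * f k j = ∑ k ∈ s, ∑ j ∈ s, w k j * g k j := by
  have hsymm : ∀ h : ι → ι → R,
      ∑ k ∈ s, ∑ j ∈ s, w k j * (h k j + h j k) = 2 • ∑ k ∈ s, ∑ j ∈ s, w k j * h k j := by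
    intro h
    simp only [mul_add, sum_add_distrib, two_nsmul]
    rw [sum_comm (f := fun k j => w k j * h j k)]
    exact congrArg _ (sum_congr rfl fun j hj => sum_congr rfl fun k hk => by rw [hw k hk j hj])
  refine IsAddTorsionFree.nsmul_right_injective two_ne_zero ?_
  simp only [← hsymm]
  exact sum_congr rfl fun k hk => sum_congr rfl fun j hj => by rw [hfg k hk j hj]

theorem one_div_mul_add_one_div_mul_swap {K : Type*} [Field K] {x₁ x₂ lam k j : K}
    (h₁k : x₁ + k ≠ 0) (h₂k : x₂ + k ≠ 0) (h₁j : x₁ + j ≠ 0) (h₂j : x₂ + j ≠ 0)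
    (hk : lam + k ≠ 0) (hj : lam + j ≠ 0)
    (hkj : lam - (lam - x₁) * (lam - x₂) / (lam + k) + j ≠ 0) :
    1 / ((x₁ + k) * (x₂ + j)) + 1 / ((x₁ + j) * (x₂ + k)) =
      (1 / (x₁ + k) + 1 / (x₂ + k) - 1 / (lam + k)) /
          (lam - (lam - x₁) * (lam - x₂) / (lam + k) + j) +
        (1 / (x₁ + j) + 1 / (x₂ + j) - 1 / (lam + j)) /
          (lam - (lam - x₁) * (lam - x₂) / (lam + j) + k) := by
  set D := lam * (x₁ + x₂ + k + j) + k * j - x₁ * x₂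
  have hDk : lam - (lam - x₁) * (lam - x₂) / (lam + k) + j = D / (lam + k) := by
    field_simp; ring
  have hDj : lam - (lam - x₁) * (lam - x₂) / (lam + j) + k = D / (lam + j) := by
    field_simp; ring
  have hD : D ≠ 0 := fun h => hkj (by rw [hDk, h, zero_div])
  rw [hDk, hDj]
  field_simp
  ring

/-- Equation (3.3): the finite symmetric partial fraction expansion of the
truncated beta function. -/
theorem beta_symmetric_partial_fraction (n : ℕ) (a lam x₁ x₂ : ℂ)
    (hx₁ : ∀ k : ℕ, k ≤ n → x₁ + k ≠ 0)
    (hx₂ : ∀ k : ℕ, k ≤ n → x₂ + k ≠ 0)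
    (hlam : ∀ k : ℕ, k ≤ n → lam + k ≠ 0)
    (hden : ∀ k : ℕ, k ≤ n → ∀ j : ℕ, j ≤ n →
      lam - (lam - x₁) * (lam - x₂) / (lam + k) + j ≠ 0) :
    poch (x₁ + x₂ + a) n / (poch x₁ (n + 1) * poch x₂ (n + 1))
      = ∑ k ∈ Finset.range (n + 1),
          ((-1 : ℂ) ^ k / ((k.factorial : ℂ) * ((n - k).factorial : ℂ)))
          * (poch (lam - (lam - x₁) * (lam - x₂) / (lam + k) + a - k) n
              / poch (lam - (lam - x₁) * (lam - x₂) / (lam + k)) (n + 1))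
          * (1 / (x₁ + k) + 1 / (x₂ + k) - 1 / (lam + k)) := by
  rw [poch_div_poch_mul_poch n a hx₁ hx₂]
  calc _ = ∑ k ∈ range (n + 1), ∑ j ∈ range (n + 1),
          (-1) ^ k / (k ! * (n - k)! : ℂ) * ((-1) ^ j / (j ! * (n - j)! : ℂ)) *
            poch (a - k - j) n * ((1 / (x₁ + k) + 1 / (x₂ + k) - 1 / (lam + k)) /
              (lam - (lam - x₁) * (lam - x₂) / (lam + k) + j)) := by
        refine sum_sum_mul_eq_of_add_swap _ (fun k _ j _ => by rw [sub_right_comm a]; ring)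
          fun k hk j hj => ?_
        rw [mem_range_succ_iff] at hk hj
        exact one_div_mul_add_one_div_mul_swap (hx₁ k hk) (hx₂ k hk) (hx₁ j hj) (hx₂ j hj)
          (hlam k hk) (hlam j hj) (hden k hk j hj)
    _ = _ := by
        refine sum_congr rfl fun k hk => ?_
        have hk' := poch_add_div_poch n (a - k) (hden k (mem_range_succ_iff.1 hk))
        rw [← add_sub_assoc] at hk'
        rw [hk', mul_sum, sum_mul]
        refine sum_congr rfl fun j _ => ?_
        ring
end

section
/- Let n ≥ 0 be an integer and let u, λ, x₁, x₂, x₃ ∈ ℂ. For each k ∈ {0,…,n} let η_k^+, η_k^− ∈ ℂ be any numbers satisfying η_k^+ + η_k^− = x₁ + x₂ + x₃ + k and (−k − λ)(η_k^+ − λ)(η_k^− − λ) = (x₁−λ)(x₂−λ)(x₃−λ). Assume x_j + k ≠ 0 (j = 1,2,3), λ + k ≠ 0, and η_k^+ + j ≠ 0, η_k^− + j ≠ 0 for all k ∈ {0,…,n} and j ∈ {0,…,n}. Then (u−x₁)_n (u−x₂)_n (u−x₃)_n / ( (x₁)_{n+1} (x₂)_{n+1} (x₃)_{n+1} ) = ∑_{k=0}^{n}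 [ (−1)^k / (k!(n−k)!) ] · [ (u+k)_n (u−η_k^+)_n (u−η_k^−)_n / ( (η_k^+)_{n+1} (η_k^−)_{n+1} ) ] · ( 1/(x₁+k) + 1/(x₂+k) + 1/(x₃+k) − 1/(λ+k) ). -/
/-!
Put `q(t) = (t - x₁)(t - x₂)(t - x₃)` and `τ_k = q(-k)/(λ + k)`, so that `-k` is a root of the
cubic `q(t) + τ_k (t - λ)`. The two relations defining `η_k^±` say precisely that the other two
roots are `η_k^±`. Hence the polynomial `N(τ) = ∏_{j<n} (q(u + j) + τ (u + j - λ))`, of degree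
at most `n`, equals `(u - x₁)_n (u - x₂)_n (u - x₃)_n` at `τ = 0` and
`(u + k)_n (u - η_k^+)_n (u - η_k^-)_n` at `τ = τ_k`. The identity is the partial fraction
expansion of `N(τ) / ∏_k (τ - τ_k)` evaluated at `τ = 0`. Evaluating the factorisation at
`t = -j` gives `τ_k - τ_j`, which produces the factorials, and its derivative at `t = -k`
produces the symmetric factor.
-/

open Finset

open Polynomial

theorem Lagrange.eval_div_eval_nodal_eq_sum {F ι : Type*} [Field F] [DecidableEq ι]
    {s : Finset ι} {v : ι → F} {f : F[X]} {x : F} (hvs : Set.InjOn v s) (hf : f.degree < #s)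
    (hx : ∀ i ∈ s, x ≠ v i) :
    f.eval x / (nodal s v).eval x = ∑ i ∈ s, nodalWeight s v i * (x - v i)⁻¹ * f.eval (v i) := by
  conv_lhs => rw [eq_interpolate hvs hf]
  rw [eval_interpolate_not_at_node _ hx, mul_div_cancel_left₀ _ (eval_nodal_not_at_node hx)]

theorem Polynomial.natDegree_prod_C_add_C_mul_X_le_card {R ι : Type*} [CommRing R] (s : Finset ι)
    (a b : ι → R) : (∏ i ∈ s, (C (a i) + C (b i) * X)).natDegree ≤ #s :=
  (natDegree_prod_le _ _).trans <| by
    simpa using sum_le_sum fun i (_ : i ∈ s) => natDegree_linear_le (a := b i) (b := a i)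

theorem prod_range_cast_sub (k : ℕ) :
    ∏ j ∈ range k, ((j : ℂ) - k) = (-1) ^ k * k.factorial := by
  induction k with
  | zero => simp
  | succ k ih =>
    have hshift (j : ℕ) : ((j + 1 : ℕ) : ℂ) - (k + 1 : ℕ) = j - k := by push_cast; ring
    rw [prod_range_succ', prod_congr rfl fun j _ => hshift j, ih]
    push_cast [Nat.factorial_succ]
    ring

theorem prod_Ico_cast_sub (k d : ℕ) :
    ∏ j ∈ Ico (k + 1) (k + d + 1), ((j : ℂ) - k) = d.factorial := by
  rw [prod_Ico_eq_prod_range, ← prod_range_add_one_eq_factorial]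
  push_cast
  exact prod_congr (by congr 1; omega) fun j _ => by ring

theorem prod_erase_range_cast_sub {n k : ℕ} (hk : k ≤ n) :
    ∏ j ∈ (range (n + 1)).erase k, ((j : ℂ) - k) = (-1) ^ k * k.factorial * (n - k).factorial := by
  obtain ⟨d, rfl⟩ := Nat.exists_eq_add_of_le hk
  have hsplit : (range (k + d + 1)).erase k = range k ∪ Ico (k + 1) (k + d + 1) := by
    ext j; simp only [mem_erase, mem_range, mem_union, mem_Ico]; omega
  have hdisj : Disjoint (range k) (Ico (k + 1) (k + d + 1)) := by
    simp only [disjoint_left, mem_range, mem_Ico]; omega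
  rw [hsplit, prod_union hdisj, prod_range_cast_sub, prod_Ico_cast_sub, Nat.add_sub_cancel_left]

def cubic (x₁ x₂ x₃ t : ℂ) : ℂ := (t - x₁) * (t - x₂) * (t - x₃)

noncomputable def node (x₁ x₂ x₃ lam κ : ℂ) : ℂ := cubic x₁ x₂ x₃ (-κ) / (lam + κ)

/-- `p, m` are a choice of `η_κ^+, η_κ^-`. -/
def IsEtaPair (x₁ x₂ x₃ lam κ p m : ℂ) : Prop :=
  p + m = x₁ + x₂ + x₃ + κ ∧
    (-κ - lam) * (p - lam) * (m - lam) = (x₁ - lam) * (x₂ - lam) * (x₃ - lam)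

theorem node_eq (x₁ x₂ x₃ lam κ : ℂ) :
    node x₁ x₂ x₃ lam κ = -((x₁ + κ) * (x₂ + κ) * (x₃ + κ)) / (lam + κ) := by
  unfold node cubic; ring

theorem node_ne_zero {x₁ x₂ x₃ lam κ : ℂ} (hx₁ : x₁ + κ ≠ 0) (hx₂ : x₂ + κ ≠ 0) (hx₃ : x₃ + κ ≠ 0)
    (hκ : lam + κ ≠ 0) : node x₁ x₂ x₃ lam κ ≠ 0 := by
  rw [node_eq]
  exact div_ne_zero (neg_ne_zero.2 (mul_ne_zero (mul_ne_zero hx₁ hx₂) hx₃)) hκ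

theorem eval_zero_nodal_node (x₁ x₂ x₃ lam : ℂ) (n : ℕ) :
    (Lagrange.nodal (range n) fun j : ℕ => node x₁ x₂ x₃ lam j).eval 0
      = poch x₁ n * poch x₂ n * poch x₃ n / poch lam n := by
  simp only [Lagrange.eval_nodal, poch, ← prod_mul_distrib, ← prod_div_distrib]
  exact prod_congr rfl fun j _ => by rw [node_eq]; ring

theorem prod_range_cubic (x₁ x₂ x₃ u : ℂ) (n : ℕ) :
    ∏ j ∈ range n, cubic x₁ x₂ x₃ (u + j)
      = poch (u - x₁) n * poch (u - x₂) n * poch (u - x₃) n := by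
  simp only [poch, cubic, ← prod_mul_distrib]
  exact prod_congr rfl fun j _ => by ring

section EtaPair

variable {x₁ x₂ x₃ lam κ p m : ℂ}

theorem IsEtaPair.cubic_add_node_mul (h : IsEtaPair x₁ x₂ x₃ lam κ p m) (hκ : lam + κ ≠ 0)
    (t : ℂ) : cubic x₁ x₂ x₃ t + node x₁ x₂ x₃ lam κ * (t - lam) = (t - p) * (t - m) * (t + κ) := by
  obtain ⟨hsum, hcub⟩ := h
  unfold node cubic
  field_simp
  linear_combination (t + κ) * hcub - (t + κ) * (lam + κ) * (lam - t) * hsum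

theorem IsEtaPair.node_sub_node (h : IsEtaPair x₁ x₂ x₃ lam κ p m) (hκ : lam + κ ≠ 0) {μ : ℂ}
    (hμ : lam + μ ≠ 0) :
    node x₁ x₂ x₃ lam κ - node x₁ x₂ x₃ lam μ = (p + μ) * (m + μ) * (μ - κ) / (lam + μ) := by
  have h' := h.cubic_add_node_mul hκ (-μ)
  rw [show node x₁ x₂ x₃ lam μ = cubic x₁ x₂ x₃ (-μ) / (lam + μ) from rfl]
  field_simp
  linear_combination -h'

theorem IsEtaPair.inv_add_inv_add_inv_sub_inv (h : IsEtaPair x₁ x₂ x₃ lam κ p m)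
    (hx₁ : x₁ + κ ≠ 0) (hx₂ : x₂ + κ ≠ 0) (hx₃ : x₃ + κ ≠ 0) (hκ : lam + κ ≠ 0) :
    1 / (x₁ + κ) + 1 / (x₂ + κ) + 1 / (x₃ + κ) - 1 / (lam + κ)
      = (p + κ) * (m + κ) / ((x₁ + κ) * (x₂ + κ) * (x₃ + κ)) := by
  obtain ⟨hsum, hcub⟩ := h
  field_simp
  linear_combination hcub - (lam + κ) ^ 2 * hsum

theorem IsEtaPair.node_ne_node (h : IsEtaPair x₁ x₂ x₃ lam κ p m) (hκ : lam + κ ≠ 0) {μ : ℂ}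
    (hμ : lam + μ ≠ 0) (hp : p + μ ≠ 0) (hm : m + μ ≠ 0) (hμκ : μ ≠ κ) :
    node x₁ x₂ x₃ lam κ ≠ node x₁ x₂ x₃ lam μ := by
  rw [← sub_ne_zero, h.node_sub_node hκ hμ]
  exact div_ne_zero (mul_ne_zero (mul_ne_zero hp hm) (sub_ne_zero.2 hμκ)) hμ

theorem IsEtaPair.prod_cubic_add_node_mul (h : IsEtaPair x₁ x₂ x₃ lam κ p m) (hκ : lam + κ ≠ 0)
    (u : ℂ) (n : ℕ) :
    ∏ j ∈ range n, (cubic x₁ x₂ x₃ (u + j) + node x₁ x₂ x₃ lam κ * (u + j - lam))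
      = poch (u + κ) n * poch (u - p) n * poch (u - m) n := by
  simp only [poch, ← prod_mul_distrib]
  exact prod_congr rfl fun j _ => by rw [h.cubic_add_node_mul hκ]; ring

theorem IsEtaPair.nodalWeight_eq {n k : ℕ} (h : IsEtaPair x₁ x₂ x₃ lam k p m) (hk : k ≤ n)
    (hlam : ∀ j ≤ n, lam + j ≠ 0) :
    Lagrange.nodalWeight (range (n + 1)) (fun j : ℕ => node x₁ x₂ x₃ lam j) k
      = (∏ j ∈ (range (n + 1)).erase k, (lam + j))
        / ((∏ j ∈ (range (n + 1)).erase k, (p + j)) * (∏ j ∈ (range (n + 1)).erase k, (m + j))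
          * ((-1) ^ k * k.factorial * (n - k).factorial)) := by
  have hsub : ∀ j ∈ (range (n + 1)).erase k, node x₁ x₂ x₃ lam k - node x₁ x₂ x₃ lam j
      = (p + j) * (m + j) * ((j : ℂ) - k) / (lam + j) := fun j hj =>
    h.node_sub_node (hlam k hk) (hlam j (Nat.lt_succ_iff.mp (mem_range.mp (mem_of_mem_erase hj))))
  rw [Lagrange.nodalWeight, prod_inv_distrib, prod_congr rfl hsub, prod_div_distrib, inv_div,
    prod_mul_distrib, prod_mul_distrib, prod_erase_range_cast_sub hk]

theorem IsEtaPair.nodalWeight_mul_inv_neg_node {n k : ℕ} (h : IsEtaPair x₁ x₂ x₃ lam k p m)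
    (hk : k ≤ n) (hx₁ : x₁ + k ≠ 0) (hx₂ : x₂ + k ≠ 0) (hx₃ : x₃ + k ≠ 0)
    (hlam : ∀ j ≤ n, lam + j ≠ 0) (hp : ∀ j ≤ n, p + j ≠ 0) (hm : ∀ j ≤ n, m + j ≠ 0) :
    Lagrange.nodalWeight (range (n + 1)) (fun j : ℕ => node x₁ x₂ x₃ lam j) k
        * (0 - node x₁ x₂ x₃ lam k)⁻¹
      = poch lam (n + 1) * ((-1) ^ k / (k.factorial * (n - k).factorial)
          * (1 / (x₁ + k) + 1 / (x₂ + k) + 1 / (x₃ + k) - 1 / (lam + k))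
          / (poch p (n + 1) * poch m (n + 1))) := by
  have hkn : k ∈ range (n + 1) := mem_range.2 (Nat.lt_succ_of_le hk)
  have hsplit (z : ℂ) : poch z (n + 1) = (z + k) * ∏ j ∈ (range (n + 1)).erase k, (z + j) :=
    (mul_prod_erase _ _ hkn).symm
  have hne {z : ℂ} (hz : ∀ j ≤ n, z + j ≠ 0) : ∏ j ∈ (range (n + 1)).erase k, (z + j) ≠ 0 :=
    prod_ne_zero_iff.2 fun j hj => hz j (Nat.lt_succ_iff.mp (mem_range.mp (mem_of_mem_erase hj)))
  have hsign : ((-1 : ℂ) ^ k) ^ 2 = 1 := by rw [← pow_mul, mul_comm, pow_mul]; simp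
  rw [h.nodalWeight_eq hk hlam, h.inv_add_inv_add_inv_sub_inv hx₁ hx₂ hx₃ (hlam k hk),
    hsplit lam, hsplit p, hsplit m, node_eq]
  field_simp [hne hp, hne hm, hne hlam, hp k hk, hm k hk, hlam k hk,
    Nat.cast_ne_zero.2 k.factorial_ne_zero, Nat.cast_ne_zero.2 (n - k).factorial_ne_zero]
  linear_combination -((x₁ + k) * (x₂ + k) * (x₃ + k)) * hsign

end EtaPair

/-- Equation (5.1): the finite symmetric partial fraction expansion for
closed string amplitudes. -/
theorem closed_finite_symmetric (n : ℕ) (u lam x₁ x₂ x₃ : ℂ)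
    (ηp ηm : ℕ → ℂ)
    (hη : ∀ k : ℕ, k ≤ n → ηp k + ηm k = x₁ + x₂ + x₃ + k
      ∧ (-(k : ℂ) - lam) * (ηp k - lam) * (ηm k - lam)
          = (x₁ - lam) * (x₂ - lam) * (x₃ - lam))
    (hx₁ : ∀ k : ℕ, k ≤ n → x₁ + k ≠ 0)
    (hx₂ : ∀ k : ℕ, k ≤ n → x₂ + k ≠ 0)
    (hx₃ : ∀ k : ℕ, k ≤ n → x₃ + k ≠ 0)
    (hlam : ∀ k : ℕ, k ≤ n → lam + k ≠ 0)
    (hηp : ∀ k : ℕ, k ≤ n → ∀ j : ℕ, j ≤ n → ηp k + j ≠ 0)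
    (hηm : ∀ k : ℕ, k ≤ n → ∀ j : ℕ, j ≤ n → ηm k + j ≠ 0) :
    poch (u - x₁) n * poch (u - x₂) n * poch (u - x₃) n
        / (poch x₁ (n + 1) * poch x₂ (n + 1) * poch x₃ (n + 1))
      = ∑ k ∈ Finset.range (n + 1),
          ((-1 : ℂ) ^ k / ((k.factorial : ℂ) * ((n - k).factorial : ℂ)))
          * (poch (u + k) n * poch (u - ηp k) n * poch (u - ηm k) n
            / (poch (ηp k) (n + 1) * poch (ηm k) (n + 1)))
          * (1 / (x₁ + k) + 1 / (x₂ + k) + 1 / (x₃ + k) - 1 / (lam + k)) := by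
  classical
  have hle {k : ℕ} (hk : k ∈ range (n + 1)) : k ≤ n := Nat.lt_succ_iff.mp (mem_range.mp hk)
  have hpair (k : ℕ) (hk : k ≤ n) : IsEtaPair x₁ x₂ x₃ lam k (ηp k) (ηm k) := hη k hk
  set τ : ℕ → ℂ := fun k => node x₁ x₂ x₃ lam k
  have hinj : Set.InjOn τ (range (n + 1)) := fun a ha b hb hab => by
    by_contra hne
    exact (hpair a (hle ha)).node_ne_node (hlam a (hle ha)) (hlam b (hle hb))
      (hηp a (hle ha) b (hle hb)) (hηm a (hle ha) b (hle hb)) (by exact_mod_cast Ne.symm hne) hab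
  have hτ : ∀ k ∈ range (n + 1), (0 : ℂ) ≠ τ k := fun k hk =>
    (node_ne_zero (hx₁ k (hle hk)) (hx₂ k (hle hk)) (hx₃ k (hle hk)) (hlam k (hle hk))).symm
  set N : ℂ[X] := ∏ j ∈ range n, (C (cubic x₁ x₂ x₃ (u + j)) + C (u + j - lam) * X)
  have hN (z : ℂ) : N.eval z = ∏ j ∈ range n, (cubic x₁ x₂ x₃ (u + j) + z * (u + j - lam)) := by
    simp only [N, eval_prod, eval_add, eval_mul, eval_C, eval_X, mul_comm]
  have hdeg : N.degree < #(range (n + 1)) := by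
    refine (degree_le_of_natDegree_le (natDegree_prod_C_add_C_mul_X_le_card _ _ _)).trans_lt ?_
    rw [card_range, card_range]
    exact_mod_cast n.lt_succ_self
  have hL : poch lam (n + 1) ≠ 0 := prod_ne_zero_iff.2 fun j hj => hlam j (hle hj)
  calc _ = N.eval 0 / (Lagrange.nodal (range (n + 1)) τ).eval 0 / poch lam (n + 1) := by
        rw [eval_zero_nodal_node, hN, ← prod_range_cubic, div_div, div_mul_cancel₀ _ hL]
        simp
    _ = _ := by
      rw [Lagrange.eval_div_eval_nodal_eq_sum hinj hdeg hτ, sum_div]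
      refine sum_congr rfl fun k hk => ?_
      rw [hN, (hpair k (hle hk)).prod_cubic_add_node_mul (hlam k (hle hk)),
        (hpair k (hle hk)).nodalWeight_mul_inv_neg_node (hle hk) (hx₁ k (hle hk)) (hx₂ k (hle hk))
          (hx₃ k (hle hk)) hlam (hηp k (hle hk)) (hηm k (hle hk))]
      field_simp
end
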